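/- Every finitely generated residually finite group is Hopfian: every surjective endomorphism of G is injective. -/

import Mathlib

/-- A finitely generated group has finitely many homomorphisms into a finite group. -/
lemma finite_monoidHom_of_fg (G Q : Type*) [Group G] [Group.FG G] [Group Q] [Finite Q] :
    Finite (G →* Q) := by
  obtain ⟨S, hS, hfin⟩ := Group.fg_iff.mp (inferInstance : Group.FG G)
  haveI := hfin.to_subtype
  have : Function.Injective (fun φ : G →* Q => fun s : S => φ s.1) := by
    intro φ ψ h
    refine MonoidHom.eq_of_eqOn_dense hS ?_
    intro x hx
    exact congrFun h ⟨x, hx⟩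
  exact Finite.of_injective _ this

/-- Mal'cev: Every finitely generated residually finite group is Hopfian:
every surjective endomorphism is injective. Residual finiteness is phrased as: every
nontrivial element avoids some finite-index normal subgroup. -/
theorem fg_residuallyFinite_hopfian
    (G : Type*) [Group G] [Group.FG G]
    (hres : ∀ g : G, g ≠ 1 → ∃ H : Subgroup G, H.Normal ∧ H.FiniteIndex ∧ g ∉ H)
    (f : G →* G) (hf : Function.Surjective f) :
    Function.Injective f := by
  rw [injective_iff_map_eq_one]
  intro g hg
  by_contra hg1
  obtain ⟨H, hN, hFI, hgH⟩ := hres g hg1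
  haveI := hN
  haveI := hFI
  haveI : Finite (G ⧸ H) := Subgroup.finite_quotient_of_finiteIndex
  haveI : Finite (G →* G ⧸ H) := finite_monoidHom_of_fg G (G ⧸ H)
  have hinj : Function.Injective (fun φ : G →* G ⧸ H => φ.comp f) := by
    intro φ ψ h
    ext x
    obtain ⟨y, rfl⟩ := hf x
    exact congrFun (congrArg (fun m : G →* G ⧸ H => (m : G → G ⧸ H)) h) y
  have hsurj := Finite.surjective_of_injective hinj
  obtain ⟨ψ, hψ⟩ := hsurj (QuotientGroup.mk' H)
  have : ψ (f g) = QuotientGroup.mk' H g := by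
    rw [← hψ]; rfl
  rw [hg, map_one] at this
  exact hgH ((QuotientGroup.eq_one_iff g).mp this.symm)
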